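/- Let p be an odd prime, q = p^s and r = p^t with s,t ≥ 1, let k ∈ E(r), let l ≥ 1, let λ_1,…,λ_l ∈ F_q* and ε_1, ε_2 ∈ F_q*. Let x_n, y_n ∈ F_q[T] be the continuants of [λ_1T,…,λ_lT], i.e. x_0 = 1, x_1 = λ_1T, y_0 = 0, y_1 = 1, and K_n = λ_nT·K_{n−1} + K_{n−2} for 2 ≤ n ≤ l. Then the algebraic equation y_l X^{r+1} − x_l X^r + (ε_1 P_k y_{l−1} − ε_2 Q_k y_l) X − ε_1 P_k x_{l−1} + ε_2 Q_k x_l = 0 has exactly one root α in F(q) = F_q((T^{−1})) satisfying |α| ≥ |T|. -/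

import Mathlib

open Polynomial

noncomputable section

/-- The coefficients `b_i = (-1)^(k-1-i) C(k-1,i) (2i+1)⁻¹` of `Q_k`. -/
def bRat (k i : ℕ) : ℚ := (-1) ^ (k - 1 - i) * (Nat.choose (k - 1) i : ℚ) * (2 * (i : ℚ) + 1)⁻¹

/-- `k ∈ E(r)` for `r = p^t`: `k = m p^l + (p^l - 1)/2`, `1 ≤ m ≤ (p-1)/2`, `0 ≤ l ≤ t-1`. -/
def memE (p t k : ℕ) : Prop :=
  ∃ m l : ℕ, 1 ≤ m ∧ m ≤ (p - 1) / 2 ∧ l ≤ t - 1 ∧ k = m * p ^ l + (p ^ l - 1) / 2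

/-- Continuant numerators: `x_0 = 1`, `x_1 = a_1`, `x_n = a_n x_{n-1} + x_{n-2}`. -/
def cnum {K : Type*} [Field K] (a : ℕ → K) : ℕ → K
  | 0 => 1
  | 1 => a 1
  | n + 2 => a (n + 2) * cnum a (n + 1) + cnum a n

/-- Continuant denominators: `y_0 = 0`, `y_1 = 1`, `y_n = a_n y_{n-1} + y_{n-2}`. -/
def cden {K : Type*} [Field K] (a : ℕ → K) : ℕ → K
  | 0 => 0
  | 1 => 1
  | n + 2 => a (n + 2) * cden a (n + 1) + cden a n

/-- The element `T` of `F(q) = F_q((T⁻¹))`, realized as the Laurent series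
(in the variable `T⁻¹`) of order `-1`. -/
def Tvar (Fq : Type*) [Field Fq] : LaurentSeries Fq := HahnSeries.single (-1 : ℤ) 1

/-- `P_k(T) = (T² - 1)^k` as an element of `F(q)`. -/
def PkLS (Fq : Type*) [Field Fq] (k : ℕ) : LaurentSeries Fq := (Tvar Fq ^ 2 - 1) ^ k

/-- `Q_k(T) = Σ_{i<k} b̄_i T^(2i+1)` as an element of `F(q)`, the coefficients being
the reductions mod `p` of the rationals `b_i` (`Fq` has characteristic `p`). -/
def QkLS (Fq : Type*) [Field Fq] (k : ℕ) : LaurentSeries Fq :=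
  ∑ i ∈ Finset.range k, algebraMap Fq (LaurentSeries Fq) ((bRat k i : Fq)) * Tvar Fq ^ (2 * i + 1)

/-- The partial quotients `λ_n T` in `F(q)`. -/
def aLin (Fq : Type*) [Field Fq] (lam : ℕ → Fq) (n : ℕ) : LaurentSeries Fq :=
  algebraMap Fq (LaurentSeries Fq) (lam n) * Tvar Fq

/-- The algebraic equation
`y_l X^(r+1) - x_l X^r + (ε₁ P_k y_{l-1} - ε₂ Q_k y_l) X - ε₁ P_k x_{l-1} + ε₂ Q_k x_l = 0`
defining a continued fraction of type `(r, l, k)`, where `x_n, y_n` are the continuants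
of `[λ₁ T, …, λ_l T]`. -/
def CFtypeEqn (Fq : Type*) [Field Fq] (r k l : ℕ) (lam : ℕ → Fq) (e1 e2 : Fq)
    (α : LaurentSeries Fq) : Prop :=
  cden (aLin Fq lam) l * α ^ (r + 1) - cnum (aLin Fq lam) l * α ^ r +
      (algebraMap Fq (LaurentSeries Fq) e1 * PkLS Fq k * cden (aLin Fq lam) (l - 1) -
        algebraMap Fq (LaurentSeries Fq) e2 * QkLS Fq k * cden (aLin Fq lam) l) * α -
      algebraMap Fq (LaurentSeries Fq) e1 * PkLS Fq k * cnum (aLin Fq lam) (l - 1) +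
      algebraMap Fq (LaurentSeries Fq) e2 * QkLS Fq k * cnum (aLin Fq lam) l = 0


/-!
Put `x = x_l`, `x' = x_{l-1}`, `y = y_l`, `y' = y_{l-1}`, `P = ε₁P_k`, `Q = ε₂Q_k` and `r = p^t`.
The equation reads `(α^r - Q)(yα - x) + P(y'α - x') = 0`, that is
`α = (xγ + x')/(yγ + y') = [λ₁T, …, λ_lT, γ]` with `γ = (α^r - Q)/P`. Hence the roots with
`|α| ≥ |T|` correspond to the fixed points with `|γ| ≥ |T|` of
`Φ(γ) = (((xγ + x')/(yγ + y'))^r - Q)/P`. Since `xy' - x'y = ±1` and `r` is a power of the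
characteristic, `Φ(γ) - Φ(γ') = ±(γ - γ')^r / (P ((yγ + y')(yγ' + y'))^r)`; as `deg P = 2k < r`,
this makes `Φ` a contraction of the ultrametric domain `|γ| ≥ |T|`, which `Φ` maps into the sphere
`|γ| = |T|^(r-2k)`. The fixed point is the limit of the iterates of `Φ`.
-/

namespace WithTop

lemma eq_top_of_add_one_le_self {a : WithTop ℤ} (h : a + 1 ≤ a) : a = ⊤ := by
  induction a with
  | top => rfl
  | coe a => norm_cast at h; omega

lemma eq_top_of_forall_coe_add_le {a : WithTop ℤ} (B : ℤ)
    (h : ∀ n : ℕ, ((B + n : ℤ) : WithTop ℤ) ≤ a) : a = ⊤ := by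
  induction a with
  | top => rfl
  | coe a =>
    have := h ((a - B).toNat + 1)
    norm_cast at this
    omega

end WithTop

section Continuants

variable {K : Type*} [Field K]

lemma cnum_mul_cden_sub_cnum_mul_cden (a : ℕ → K) {l : ℕ} (hl : 1 ≤ l) :
    cnum a l * cden a (l - 1) - cnum a (l - 1) * cden a l = (-1) ^ l := by
  obtain ⟨n, rfl⟩ := Nat.exists_eq_add_of_le' hl
  clear hl
  simp only [Nat.add_sub_cancel]
  induction n with
  | zero => simp [cnum, cden]
  | succ n ih =>
    simp only [cnum, cden]
    rw [pow_succ, ← ih]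
    ring

lemma cden_succ_eq_cnum (a : ℕ → K) (n : ℕ) : cden a (n + 1) = cnum (fun i => a (i + 1)) n := by
  induction n using Nat.twoStepInduction with
  | zero => rfl
  | one => simp [cnum, cden]
  | more n ih0 ih1 => rw [cden, cnum, ih0, ih1]

end Continuants

namespace LaurentSeries

open HahnSeries

variable {K : Type*} [Field K]

lemma orderTop_pow (x : LaurentSeries K) (n : ℕ) : (x ^ n).orderTop = n • x.orderTop := by
  simpa only [addVal_apply] using (addVal ℤ K).map_pow x n

lemma orderTop_div (x y : LaurentSeries K) : (x / y).orderTop = x.orderTop - y.orderTop := by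
  simpa only [addVal_apply] using (addVal ℤ K).map_div (x := x) (y := y)

lemma orderTop_le_coe_iff {x : LaurentSeries K} {n : ℤ} :
    x.orderTop ≤ n ↔ x ≠ 0 ∧ x.order ≤ n := by
  by_cases hx : x = 0
  · simp [hx]
  · rw [← order_eq_orderTop_of_ne_zero hx]
    simp [hx]

lemma exists_lim_of_le_orderTop_succ_sub (g : ℕ → LaurentSeries K) (B : ℤ)
    (h0 : (B : WithTop ℤ) ≤ (g 0).orderTop)
    (hg : ∀ n : ℕ, ((B + n : ℤ) : WithTop ℤ) ≤ (g (n + 1) - g n).orderTop) :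
    ∃ γ : LaurentSeries K, ∀ n : ℕ, ((B + n : ℤ) : WithTop ℤ) ≤ (γ - g n).orderTop := by
  have hcauchy : ∀ n m : ℕ, n ≤ m → ((B + n : ℤ) : WithTop ℤ) ≤ (g m - g n).orderTop := by
    intro n m hnm
    induction m, hnm using Nat.le_induction with
    | base => simp
    | succ m hnm ih =>
      rw [← sub_add_sub_cancel (g (m + 1)) (g m) (g n)]
      refine le_trans (le_min ?_ ih) min_orderTop_le_orderTop_add
      exact le_trans (by norm_cast; omega) (hg m)
  have hcoeff : ∀ (n m : ℕ) (e : ℤ), n ≤ m → e < B + n → (g m).coeff e = (g n).coeff e := by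
    intro n m e hnm he
    rw [← sub_eq_zero, ← HahnSeries.coeff_sub]
    exact coeff_eq_zero_of_lt_orderTop (lt_of_lt_of_le (by exact_mod_cast he) (hcauchy n m hnm))
  -- the coefficient of index `e` stabilises from the `N e`-th term on
  let N : ℤ → ℕ := fun e => (e - B).toNat + 1
  have hN : ∀ e, e < B + N e := fun e => by simp only [N]; omega
  have hbdd : BddBelow (Function.support fun e => (g (N e)).coeff e) := by
    refine ⟨B, fun e he => ?_⟩
    by_contra! hlt
    apply he
    change (g (N e)).coeff e = 0
    rw [hcoeff 0 (N e) e (Nat.zero_le _) (by omega)]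
    exact coeff_eq_zero_of_lt_orderTop (lt_of_lt_of_le (by exact_mod_cast hlt) h0)
  refine ⟨ofSuppBddBelow _ hbdd, fun n => le_orderTop_iff_forall.mpr fun e he => ?_⟩
  have he : e < B + n := by exact_mod_cast he
  rw [HahnSeries.coeff_sub, coeff_ofSuppBddBelow,
    ← hcoeff (N e) (max n (N e)) e (le_max_right _ _) (hN e),
    ← hcoeff n (max n (N e)) e (le_max_left _ _) he, sub_self]

theorem existsUnique_fixedPoint_of_contracting (Φ : LaurentSeries K → LaurentSeries K)
    (D : Set (LaurentSeries K)) (B : ℤ) (hD : ∀ x : LaurentSeries K, x.orderTop = B → x ∈ D)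
    (hΦ : ∀ x ∈ D, (Φ x).orderTop = B)
    (hcontr : ∀ x ∈ D, ∀ y ∈ D, (x - y).orderTop + 1 ≤ (Φ x - Φ y).orderTop) :
    ∃! x, x ∈ D ∧ Φ x = x := by
  let g : ℕ → LaurentSeries K := fun n => Φ^[n] (single B 1)
  have hg_succ : ∀ n, g (n + 1) = Φ (g n) := fun n => Function.iterate_succ_apply' Φ n _
  have hg : ∀ n, (g n).orderTop = B := by
    intro n
    induction n with
    | zero => exact orderTop_single one_ne_zero
    | succ n ih => rw [hg_succ]; exact hΦ _ (hD _ ih)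
  have hgD : ∀ n, g n ∈ D := fun n => hD _ (hg n)
  have hstep : ∀ n : ℕ, ((B + n : ℤ) : WithTop ℤ) ≤ (g (n + 1) - g n).orderTop := by
    intro n
    induction n with
    | zero => simpa [hg] using min_orderTop_le_orderTop_sub (x := g 1) (y := g 0)
    | succ n ih =>
      have hn := hcontr _ (hgD (n + 1)) _ (hgD n)
      rw [← hg_succ, ← hg_succ] at hn
      calc ((B + (n + 1 : ℕ) : ℤ) : WithTop ℤ) = ((B + n : ℤ) : WithTop ℤ) + 1 := by
            norm_cast; omega
        _ ≤ (g (n + 1) - g n).orderTop + 1 := by gcongr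
        _ ≤ _ := hn
  obtain ⟨γ, hγ⟩ := exists_lim_of_le_orderTop_succ_sub g B (hg 0).ge hstep
  have hγD : γ ∈ D := by
    refine hD γ ?_
    rw [← sub_add_cancel γ (g 1), orderTop_add_eq_right] <;> rw [hg 1]
    exact lt_of_lt_of_le (by norm_cast; omega) (hγ 1)
  have hfix : Φ γ = γ := by
    rw [← sub_eq_zero, ← orderTop_eq_top]
    refine WithTop.eq_top_of_forall_coe_add_le B fun n => ?_
    rw [← sub_add_sub_cancel _ (g (n + 1))]
    refine le_trans (le_min ?_ ?_) min_orderTop_le_orderTop_add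
    · rw [hg_succ]
      exact (hγ n).trans <| (le_add_of_nonneg_right zero_le_one).trans (hcontr _ hγD _ (hgD n))
    · rw [← neg_sub, orderTop_neg]
      exact le_trans (by norm_cast; omega) (hγ (n + 1))
  refine ⟨γ, ⟨hγD, hfix⟩, fun x ⟨hx, hxfix⟩ => ?_⟩
  rw [← sub_eq_zero, ← orderTop_eq_top]
  apply WithTop.eq_top_of_add_one_le_self
  simpa only [hxfix, hfix] using hcontr x hx γ hγD

section Continuants

variable {a : ℕ → LaurentSeries K} {N : ℕ}

lemma orderTop_cnum (ha : ∀ i, 1 ≤ i → i ≤ N → (a i).orderTop = ((-1 : ℤ) : WithTop ℤ)) :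
    ∀ n ≤ N, (cnum a n).orderTop = ((-n : ℤ) : WithTop ℤ) := by
  intro n
  induction n using Nat.twoStepInduction with
  | zero => intro _; simp [cnum]
  | one => intro h; simpa [cnum] using ha 1 le_rfl h
  | more n ih0 ih1 =>
    intro hn
    rw [cnum, orderTop_add_eq_left] <;> rw [orderTop_mul, ha (n + 2) (by omega) hn, ih1 (by omega)]
    · norm_cast; omega
    · rw [ih0 (by omega)]; norm_cast; omega

lemma orderTop_cden (ha : ∀ i, 1 ≤ i → i ≤ N → (a i).orderTop = ((-1 : ℤ) : WithTop ℤ))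
    {n : ℕ} (hn1 : 1 ≤ n) (hn : n ≤ N) : (cden a n).orderTop = ((1 - n : ℤ) : WithTop ℤ) := by
  obtain ⟨m, rfl⟩ := Nat.exists_eq_add_of_le' hn1
  have ha' : ∀ i, 1 ≤ i → i ≤ N - 1 → (a (i + 1)).orderTop = ((-1 : ℤ) : WithTop ℤ) :=
    fun i h1 h2 => ha (i + 1) (by omega) (by omega)
  rw [cden_succ_eq_cnum, orderTop_cnum ha' m (by omega)]
  congr 1
  push_cast
  ring

lemma le_orderTop_cden (ha : ∀ i, 1 ≤ i → i ≤ N → (a i).orderTop = ((-1 : ℤ) : WithTop ℤ))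
    {n : ℕ} (hn : n ≤ N) : ((1 - n : ℤ) : WithTop ℤ) ≤ (cden a n).orderTop := by
  rcases Nat.eq_zero_or_pos n with rfl | hn1
  · simp [cden]
  · exact (orderTop_cden ha hn1 hn).ge

lemma orderTop_cnum_mul_cden_sub (a : ℕ → LaurentSeries K) {l : ℕ} (hl : 1 ≤ l) :
    (cnum a l * cden a (l - 1) - cnum a (l - 1) * cden a l).orderTop = 0 := by
  rw [cnum_mul_cden_sub_cnum_mul_cden _ hl, orderTop_pow, orderTop_neg, orderTop_one, nsmul_zero]

end Continuants

instance {p : ℕ} [ExpChar K p] : ExpChar (LaurentSeries K) p :=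
  expChar_of_injective_ringHom HahnSeries.C_injective p

lemma orderTop_mul_add_of_le {a b γ : LaurentSeries K} {m : ℤ} (ha : a.orderTop = m)
    (hb : (m : WithTop ℤ) ≤ b.orderTop) (hγ : γ.orderTop ≤ ((-1 : ℤ) : WithTop ℤ)) :
    (a * γ + b).orderTop = m + γ.orderTop := by
  obtain ⟨g, hg, hg1⟩ := WithTop.le_coe_iff.mp hγ
  rw [orderTop_add_eq_left] <;> rw [orderTop_mul, ha, hg]
  refine lt_of_lt_of_le ?_ hb
  norm_cast
  omega

/-- The continued fraction `[a₁, …, a_l, γ]` when `x, y` and `x', y'` are the continuants of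
`[a₁, …, a_l]` and `[a₁, …, a_{l-1}]`. -/
def mobius (x x' y y' γ : LaurentSeries K) : LaurentSeries K := (x * γ + x') / (y * γ + y')

/-- The complete quotient `γ` of `α` in a continued fraction of type `(r, l, k)`, defined by
`α ^ r = P γ + Q`. -/
def completeQuotient (P Q : LaurentSeries K) (r : ℕ) (α : LaurentSeries K) : LaurentSeries K :=
  (α ^ r - Q) / P

section RootsAsFixedPoints

variable {x x' y y' P Q : LaurentSeries K} {l k : ℕ}

lemma orderTop_mobius (hx : x.orderTop = ((-l : ℤ) : WithTop ℤ))
    (hx' : ((-l : ℤ) : WithTop ℤ) ≤ x'.orderTop) (hy : y.orderTop = ((1 - l : ℤ) : WithTop ℤ))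
    (hy' : ((1 - l : ℤ) : WithTop ℤ) ≤ y'.orderTop) {γ : LaurentSeries K}
    (hγ : γ.orderTop ≤ ((-1 : ℤ) : WithTop ℤ)) :
    (mobius x x' y y' γ).orderTop = ((-1 : ℤ) : WithTop ℤ) := by
  obtain ⟨g, hg, -⟩ := WithTop.le_coe_iff.mp hγ
  rw [mobius, orderTop_div, orderTop_mul_add_of_le hx hx' hγ, orderTop_mul_add_of_le hy hy' hγ, hg,
    ← WithTop.coe_add, ← WithTop.coe_add, ← WithTop.LinearOrderedAddCommGroup.coe_sub]
  congr 1
  ring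

lemma mobius_denom_ne_zero (hy : y.orderTop = ((1 - l : ℤ) : WithTop ℤ))
    (hy' : ((1 - l : ℤ) : WithTop ℤ) ≤ y'.orderTop) {γ : LaurentSeries K}
    (hγ : γ.orderTop ≤ ((-1 : ℤ) : WithTop ℤ)) : y * γ + y' ≠ 0 := by
  obtain ⟨g, hg, -⟩ := WithTop.le_coe_iff.mp hγ
  rw [← orderTop_ne_top, orderTop_mul_add_of_le hy hy' hγ, hg]
  simp

lemma mobius_sub_mobius {γ γ' : LaurentSeries K} (hγ : y * γ + y' ≠ 0) (hγ' : y * γ' + y' ≠ 0) :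
    mobius x x' y y' γ - mobius x x' y y' γ' =
      (x * y' - x' * y) * (γ - γ') / ((y * γ + y') * (y * γ' + y')) := by
  rw [mobius, mobius, div_sub_div _ _ hγ hγ']
  ring

lemma orderTop_completeQuotient (hP : P.orderTop = ((-2 * k : ℤ) : WithTop ℤ))
    (hQ : ((1 - 2 * k : ℤ) : WithTop ℤ) ≤ Q.orderTop) {r : ℕ} (hr : 2 * k + 1 ≤ r)
    {α : LaurentSeries K} {a : ℤ} (hα : α.orderTop = a) (ha : a ≤ -1) :
    (completeQuotient P Q r α).orderTop = ((r * a + 2 * k : ℤ) : WithTop ℤ) := by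
  have hαr : (α ^ r).orderTop = ((r * a : ℤ) : WithTop ℤ) := by
    rw [orderTop_pow, hα, ← WithTop.coe_nsmul, nsmul_eq_mul]
  rw [completeQuotient, orderTop_div, orderTop_sub, hαr, hP,
    ← WithTop.LinearOrderedAddCommGroup.coe_sub]
  · congr 1
    ring
  · rw [hαr]
    refine lt_of_lt_of_le (WithTop.coe_lt_coe.mpr ?_) hQ
    nlinarith

lemma completeQuotient_sub_completeQuotient {p : ℕ} [ExpChar K p] (t : ℕ) (α β : LaurentSeries K) :
    completeQuotient P Q (p ^ t) α - completeQuotient P Q (p ^ t) β = (α - β) ^ p ^ t / P := by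
  rw [completeQuotient, completeQuotient, div_sub_div_same, sub_pow_expChar_pow,
    sub_sub_sub_cancel_right]

lemma add_one_le_orderTop_completeQuotient_mobius_sub {p : ℕ} [ExpChar K p] {t : ℕ} (hl : 1 ≤ l)
    (hy : y.orderTop = ((1 - l : ℤ) : WithTop ℤ)) (hy' : ((1 - l : ℤ) : WithTop ℤ) ≤ y'.orderTop)
    (hdet : (x * y' - x' * y).orderTop = 0) (hP : P.orderTop = ((-2 * k : ℤ) : WithTop ℤ))
    (hr : 2 * k + 1 ≤ p ^ t) {γ γ' : LaurentSeries K} (hγ : γ.orderTop ≤ ((-1 : ℤ) : WithTop ℤ))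
    (hγ' : γ'.orderTop ≤ ((-1 : ℤ) : WithTop ℤ)) :
    (γ - γ').orderTop + 1 ≤
      (completeQuotient P Q (p ^ t) (mobius x x' y y' γ) -
        completeQuotient P Q (p ^ t) (mobius x x' y y' γ')).orderTop := by
  rcases eq_or_ne γ γ' with rfl | hne
  · simp
  obtain ⟨g, hg, hg1⟩ := WithTop.le_coe_iff.mp hγ
  obtain ⟨g', hg', hg1'⟩ := WithTop.le_coe_iff.mp hγ'
  obtain ⟨d, hd⟩ := WithTop.ne_top_iff_exists.mp (orderTop_ne_top.mpr (sub_ne_zero.mpr hne))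
  have hdg : min g g' ≤ d := by
    have := min_orderTop_le_orderTop_sub (x := γ) (y := γ')
    rw [hg, hg', ← hd] at this
    exact_mod_cast this
  have hden := orderTop_mul_add_of_le hy hy' hγ
  have hden' := orderTop_mul_add_of_le hy hy' hγ'
  rw [hg] at hden
  rw [hg'] at hden'
  rw [completeQuotient_sub_completeQuotient, mobius_sub_mobius (orderTop_ne_top.mp (by simp [hden]))
    (orderTop_ne_top.mp (by simp [hden'])), orderTop_div, orderTop_pow, orderTop_div, orderTop_mul,
    orderTop_mul, hdet, ← hd, hden, hden', hP, zero_add]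
  simp only [← WithTop.coe_one, ← WithTop.coe_add, ← WithTop.LinearOrderedAddCommGroup.coe_sub,
    ← WithTop.coe_nsmul, WithTop.coe_le_coe, nsmul_eq_mul]
  have hu : 1 ≤ d - (1 - l + g + (1 - l + g')) := by omega
  have hr' : (1 : ℤ) ≤ ((p ^ t : ℕ) : ℤ) := by omega
  push_cast at hr' ⊢
  nlinarith

lemma eqn_iff_exists_fixedPoint (hy : y.orderTop = ((1 - l : ℤ) : WithTop ℤ))
    (hy' : ((1 - l : ℤ) : WithTop ℤ) ≤ y'.orderTop) (hP : P.orderTop = ((-2 * k : ℤ) : WithTop ℤ))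
    (hQ : ((1 - 2 * k : ℤ) : WithTop ℤ) ≤ Q.orderTop) {r : ℕ} (hr : 2 * k + 1 ≤ r)
    {α : LaurentSeries K} (hα : α.orderTop ≤ ((-1 : ℤ) : WithTop ℤ)) :
    (α ^ r - Q) * (y * α - x) + P * (y' * α - x') = 0 ↔
      ∃ γ, γ.orderTop ≤ ((-1 : ℤ) : WithTop ℤ) ∧ completeQuotient P Q r (mobius x x' y y' γ) = γ ∧
        mobius x x' y y' γ = α := by
  have hP0 : P ≠ 0 := orderTop_ne_top.mp (by rw [hP]; exact WithTop.coe_ne_top)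
  have hden : ∀ γ : LaurentSeries K, γ.orderTop ≤ ((-1 : ℤ) : WithTop ℤ) → y * γ + y' ≠ 0 :=
    fun γ hγ => mobius_denom_ne_zero hy hy' hγ
  constructor
  · intro h
    obtain ⟨a, ha, ha1⟩ := WithTop.le_coe_iff.mp hα
    have hγ : (completeQuotient P Q r α).orderTop ≤ ((-1 : ℤ) : WithTop ℤ) := by
      rw [orderTop_completeQuotient hP hQ hr ha ha1]
      exact WithTop.coe_le_coe.mpr (by nlinarith)
    have hPγ : P * completeQuotient P Q r α = α ^ r - Q := mul_div_cancel₀ _ hP0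
    have hm : mobius x x' y y' (completeQuotient P Q r α) = α := by
      rw [mobius, div_eq_iff (hden _ hγ)]
      apply mul_left_cancel₀ hP0
      linear_combination (x - y * α) * hPγ - h
    exact ⟨_, hγ, by rw [hm], hm⟩
  · rintro ⟨γ, hγ, hfix, rfl⟩
    have hPγ : mobius x x' y y' γ ^ r - Q = P * γ := by
      rw [completeQuotient, div_eq_iff hP0] at hfix
      linear_combination hfix
    have hm : mobius x x' y y' γ * (y * γ + y') = x * γ + x' := div_mul_cancel₀ _ (hden γ hγ)
    rw [hPγ]
    linear_combination P * hm

theorem existsUnique_root {p : ℕ} [ExpChar K p] {t : ℕ} (hl : 1 ≤ l)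
    (hx : x.orderTop = ((-l : ℤ) : WithTop ℤ)) (hx' : ((-l : ℤ) : WithTop ℤ) ≤ x'.orderTop)
    (hy : y.orderTop = ((1 - l : ℤ) : WithTop ℤ)) (hy' : ((1 - l : ℤ) : WithTop ℤ) ≤ y'.orderTop)
    (hdet : (x * y' - x' * y).orderTop = 0) (hP : P.orderTop = ((-2 * k : ℤ) : WithTop ℤ))
    (hQ : ((1 - 2 * k : ℤ) : WithTop ℤ) ≤ Q.orderTop) (hr : 2 * k + 1 ≤ p ^ t) :
    ∃! α : LaurentSeries K, α.orderTop ≤ ((-1 : ℤ) : WithTop ℤ) ∧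
      (α ^ p ^ t - Q) * (y * α - x) + P * (y' * α - x') = 0 := by
  obtain ⟨γ, ⟨hγ, hfix⟩, huniq⟩ := existsUnique_fixedPoint_of_contracting
    (fun γ => completeQuotient P Q (p ^ t) (mobius x x' y y' γ))
    {γ | γ.orderTop ≤ ((-1 : ℤ) : WithTop ℤ)} (2 * k - (p ^ t : ℕ))
    (fun γ hγ => show γ.orderTop ≤ _ by rw [hγ]; exact WithTop.coe_le_coe.mpr (by omega))
    (fun γ hγ => by
      rw [orderTop_completeQuotient hP hQ hr (orderTop_mobius hx hx' hy hy' hγ) le_rfl]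
      congr 1
      ring)
    (fun γ hγ γ' hγ' =>
      add_one_le_orderTop_completeQuotient_mobius_sub hl hy hy' hdet hP hr hγ hγ')
  have hroots := fun α hα =>
    eqn_iff_exists_fixedPoint (x := x) (x' := x') (α := α) hy hy' hP hQ hr hα
  have hαγ := (orderTop_mobius hx hx' hy hy' hγ).le
  refine ⟨mobius x x' y y' γ, ⟨hαγ, (hroots _ hαγ).mpr ⟨γ, hγ, hfix, rfl⟩⟩, ?_⟩
  rintro α ⟨hα, h⟩
  obtain ⟨γ', hγ', hfix', rfl⟩ := (hroots α hα).mp h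
  rw [huniq γ' ⟨hγ', hfix'⟩]

end RootsAsFixedPoints

end LaurentSeries

section SpecialSeries

open HahnSeries

variable {K : Type*} [Field K]

lemma algebraMap_laurentSeries_eq_C (c : K) :
    algebraMap K (LaurentSeries K) c = HahnSeries.C c := by
  rw [HahnSeries.algebraMap_apply', PowerSeries.algebraMap_apply, Algebra.algebraMap_self,
    RingHom.id_apply, HahnSeries.ofPowerSeries_C]

lemma orderTop_algebraMap {c : K} (hc : c ≠ 0) :
    (algebraMap K (LaurentSeries K) c).orderTop = 0 := by
  rw [algebraMap_laurentSeries_eq_C, HahnSeries.C_apply, orderTop_single hc]; rfl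

lemma zero_le_orderTop_algebraMap (c : K) : 0 ≤ (algebraMap K (LaurentSeries K) c).orderTop := by
  rw [algebraMap_laurentSeries_eq_C, HahnSeries.C_apply]
  exact orderTop_single_le

lemma orderTop_Tvar : (Tvar K).orderTop = ((-1 : ℤ) : WithTop ℤ) := orderTop_single one_ne_zero

lemma orderTop_aLin {lam : ℕ → K} {n : ℕ} (h : lam n ≠ 0) :
    (aLin K lam n).orderTop = ((-1 : ℤ) : WithTop ℤ) := by
  rw [aLin, orderTop_mul, orderTop_algebraMap h, orderTop_Tvar, zero_add]

lemma orderTop_PkLS (k : ℕ) : (PkLS K k).orderTop = ((-2 * k : ℤ) : WithTop ℤ) := by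
  have hT2 : (Tvar K ^ 2).orderTop = ((-2 : ℤ) : WithTop ℤ) := by
    rw [LaurentSeries.orderTop_pow, orderTop_Tvar]; norm_cast
  rw [PkLS, LaurentSeries.orderTop_pow, orderTop_sub, hT2, ← WithTop.coe_nsmul, nsmul_eq_mul]
  · congr 1; ring
  · rw [hT2, orderTop_one]; norm_cast

lemma le_orderTop_QkLS (k : ℕ) : ((1 - 2 * k : ℤ) : WithTop ℤ) ≤ (QkLS K k).orderTop := by
  rw [QkLS, ← addVal_apply]
  refine AddValuation.map_le_sum _ fun i hi => ?_
  rw [addVal_apply, orderTop_mul, LaurentSeries.orderTop_pow, orderTop_Tvar]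
  refine le_trans ?_ (add_le_add_left (zero_le_orderTop_algebraMap _) _)
  rw [zero_add]
  have := Finset.mem_range.mp hi
  rw [← WithTop.coe_nsmul, WithTop.coe_le_coe, nsmul_eq_mul]
  push_cast
  omega

end SpecialSeries

lemma memE.two_mul_add_one_le {p t k : ℕ} (hk : memE p t k) (hp : p.Prime) (hodd : p ≠ 2)
    (ht : 1 ≤ t) : 2 * k + 1 ≤ p ^ t := by
  obtain ⟨m, j, hm1, hm2, hj, rfl⟩ := hk
  obtain ⟨c, hc⟩ : Odd (p ^ j) := (hp.odd_of_ne_two hodd).pow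
  have h2m : 2 * m + 1 ≤ p := by omega
  calc 2 * (m * p ^ j + (p ^ j - 1) / 2) + 1 = (2 * m + 1) * p ^ j := by
        rw [hc, Nat.add_sub_cancel, Nat.mul_div_cancel_left _ two_pos]; ring
    _ ≤ p * p ^ j := Nat.mul_le_mul_right _ h2m
    _ = p ^ (j + 1) := (pow_succ' p j).symm
    _ ≤ p ^ t := Nat.pow_le_pow_right hp.pos (by omega)

lemma cFtypeEqn_iff {Fq : Type*} [Field Fq] (r k l : ℕ) (lam : ℕ → Fq) (e1 e2 : Fq)
    (α : LaurentSeries Fq) :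
    CFtypeEqn Fq r k l lam e1 e2 α ↔
      (α ^ r - algebraMap Fq (LaurentSeries Fq) e2 * QkLS Fq k) *
          (cden (aLin Fq lam) l * α - cnum (aLin Fq lam) l) +
        algebraMap Fq (LaurentSeries Fq) e1 * PkLS Fq k *
          (cden (aLin Fq lam) (l - 1) * α - cnum (aLin Fq lam) (l - 1)) = 0 := by
  rw [CFtypeEqn]
  constructor <;> intro h <;> linear_combination h

theorem statement7_general (p s t : ℕ) (hp : p.Prime) (hodd : p ≠ 2) (ht : 1 ≤ t)
    (Fq : Type*) [Field Fq] [Fintype Fq] (hq : Fintype.card Fq = p ^ s)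
    (k : ℕ) (hk : memE p t k) (l : ℕ) (hl : 1 ≤ l)
    (lam : ℕ → Fq) (hlam : ∀ n, 1 ≤ n → n ≤ l → lam n ≠ 0)
    (e1 e2 : Fq) (he1 : e1 ≠ 0) :
    ∃! α : LaurentSeries Fq,
      (α ≠ 0 ∧ α.order ≤ -1) ∧ CFtypeEqn Fq (p ^ t) k l lam e1 e2 α := by
  have : Fact p.Prime := ⟨hp⟩
  have : CharP Fq p := charP_of_card_eq_prime_pow hq
  have ha : ∀ i, 1 ≤ i → i ≤ l → (aLin Fq lam i).orderTop = ((-1 : ℤ) : WithTop ℤ) :=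
    fun i h1 h2 => orderTop_aLin (hlam i h1 h2)
  have hx' : ((-l : ℤ) : WithTop ℤ) ≤ (cnum (aLin Fq lam) (l - 1)).orderTop := by
    rw [LaurentSeries.orderTop_cnum ha (l - 1) (by omega)]
    exact WithTop.coe_le_coe.mpr (by omega)
  have hy' : ((1 - l : ℤ) : WithTop ℤ) ≤ (cden (aLin Fq lam) (l - 1)).orderTop :=
    (WithTop.coe_le_coe.mpr (by omega)).trans (LaurentSeries.le_orderTop_cden ha (by omega))
  have hP : (algebraMap Fq (LaurentSeries Fq) e1 * PkLS Fq k).orderTop =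
      ((-2 * k : ℤ) : WithTop ℤ) := by
    rw [HahnSeries.orderTop_mul, orderTop_algebraMap he1, orderTop_PkLS, zero_add]
  have hQ : ((1 - 2 * k : ℤ) : WithTop ℤ) ≤
      (algebraMap Fq (LaurentSeries Fq) e2 * QkLS Fq k).orderTop := by
    rw [HahnSeries.orderTop_mul, ← zero_add ((1 - 2 * k : ℤ) : WithTop ℤ)]
    exact add_le_add (zero_le_orderTop_algebraMap e2) (le_orderTop_QkLS k)
  refine (existsUnique_congr fun α => and_congr LaurentSeries.orderTop_le_coe_iff.symm
    (cFtypeEqn_iff _ _ _ _ _ _ α)).mpr ?_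
  exact LaurentSeries.existsUnique_root hl (LaurentSeries.orderTop_cnum ha l le_rfl) hx'
    (LaurentSeries.orderTop_cden ha hl le_rfl) hy' (LaurentSeries.orderTop_cnum_mul_cden_sub _ hl)
    hP hQ (hk.two_mul_add_one_le hp hodd ht)

/-- Proposition A: the algebraic equation
`y_l X^(r+1) - x_l X^r + (ε₁ P_k y_{l-1} - ε₂ Q_k y_l) X - ε₁ P_k x_{l-1} + ε₂ Q_k x_l = 0`
has exactly one root `α` in `F(q) = F_q((T⁻¹))` with `|α| ≥ |T|`
(i.e. `α ≠ 0` and `ord(α) ≤ -1`). -/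
theorem statement7 (p s t : ℕ) (hp : p.Prime) (hodd : p ≠ 2) (hs : 1 ≤ s) (ht : 1 ≤ t)
    (Fq : Type*) [Field Fq] [Fintype Fq] (hq : Fintype.card Fq = p ^ s)
    (k : ℕ) (hk : memE p t k) (l : ℕ) (hl : 1 ≤ l)
    (lam : ℕ → Fq) (hlam : ∀ n, 1 ≤ n → n ≤ l → lam n ≠ 0)
    (e1 e2 : Fq) (he1 : e1 ≠ 0) (he2 : e2 ≠ 0) :
    ∃! α : LaurentSeries Fq,
      (α ≠ 0 ∧ α.order ≤ -1) ∧ CFtypeEqn Fq (p ^ t) k l lam e1 e2 α :=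
  statement7_general p s t hp hodd ht Fq hq k hk l hl lam hlam e1 e2 he1
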